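/- arXiv:2112.04897 — 3 statements merged into one kernel-verified Lean document; each statement's English description precedes it below -/
import Mathlib

section
/- Let U be an invertible adjointable operator on H with U*U W_j ⊆ W_j for all j and U commuting with C and C', and let Λ_{CC'} = {W_j, Λ_j, v_j} be a (C,C')-controlled K-g-fusion frame for H with bounds A, B. Then {UW_j, Λ_j P_{W_j} U*, v_j}_{j∈J} is a (C,C')-controlled (UKU*)-g-fusion frame for H with bounds A/‖U‖² and B‖U‖². -/
open scoped RightActions

noncomputable section

/-- The `CStarModule` class as it stood in the older Mathlib (right `Aᵐᵒᵖ`-action). -/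
class CStarModuleOld (A E : Type*) [NonUnitalSemiring A] [StarRing A] [Module ℂ A]
    [AddCommGroup E] [Module ℂ E] [PartialOrder A] [SMul Aᵐᵒᵖ E] [Norm A] [Norm E]
    extends Inner A E where
  inner_add_right {x} {y} {z} : inner x (y + z) = inner x y + inner x z
  inner_self_nonneg {x} : 0 ≤ inner x x
  inner_self {x} : inner x x = 0 ↔ x = 0
  inner_op_smul_right {a : A} {x y : E} : inner x (y <• a) = inner x y * a
  inner_smul_right_complex {z : ℂ} {x} {y} : inner x (z • y) = z • inner x y
  star_inner x y : star (inner x y) = inner y x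
  norm_eq_sqrt_norm_inner_self x : ‖x‖ = √‖inner x x‖

variable {A : Type*} [CStarAlgebra A] [PartialOrder A] [StarOrderedRing A]
variable {H : Type*} [NormedAddCommGroup H] [NormedSpace ℂ H] [SMul Aᵐᵒᵖ H] [CStarModuleOld A H]
variable {J : Type*} {Hs : J → Type*} [∀ j, NormedAddCommGroup (Hs j)]
  [∀ j, NormedSpace ℂ (Hs j)] [∀ j, SMul Aᵐᵒᵖ (Hs j)] [∀ j, CStarModuleOld A (Hs j)]

/-!
Everything is transported along `U*`. Since `U*` commutes with `C` and `C'`, and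
`P_{W_j} U* P_{UW_j} = P_{W_j} U*` (the projection onto `UW_j` fixes `U P_{W_j} x`), the new frame
sum at `f` is the old one at `U* f`. The bounds then come from the operator inequalities
`⟪U x, U x⟫ ≤ ‖U‖² ⟪x, x⟫` and `⟪U* x, U* x⟫ ≤ ‖U*‖² ⟪x, x⟫ ≤ ‖U‖² ⟪x, x⟫` in the C*-algebra.
-/

open Filter Topology MulOpposite CStarModule
open scoped InnerProductSpace

-- `⟪x, y⟫_Aᵐᵒᵖ` is definitionally `op ⟪x, y⟫_A`, and order and real scalars on `Aᵐᵒᵖ` are those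
-- of `A`, so inequalities proved for Mathlib's `CStarModule` read directly as ones for the old class.
instance CStarModuleOld.toCStarModuleMulOpposite {B E : Type*} [NonUnitalCStarAlgebra B]
    [PartialOrder B] [AddCommGroup E] [Module ℂ E] [SMul Bᵐᵒᵖ E] [Norm E]
    [CStarModuleOld B E] : CStarModule Bᵐᵒᵖ E where
  inner x y := op (inner B x y)
  inner_add_right := by simp [CStarModuleOld.inner_add_right]
  inner_self_nonneg := op_nonneg.mpr CStarModuleOld.inner_self_nonneg
  inner_self := by simp [CStarModuleOld.inner_self]
  inner_op_smul_right {a x y} := by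
    simpa using congrArg op (CStarModuleOld.inner_op_smul_right (a := a.unop) (x := x) (y := y))
  inner_smul_right_complex := by simp [CStarModuleOld.inner_smul_right_complex]
  star_inner x y := congrArg op (CStarModuleOld.star_inner x y)
  norm_eq_sqrt_norm_inner_self := CStarModuleOld.norm_eq_sqrt_norm_inner_self

lemma IsSelfAdjoint.eq_zero_of_mul_mul_self_eq_zero {B : Type*} [NonUnitalCStarAlgebra B] {c : B}
    (hc : IsSelfAdjoint c) (h : c * c * c = 0) : c = 0 := by
  have hcc : c * c = 0 := by
    rw [← CStarRing.star_mul_self_eq_zero_iff, star_mul, hc.star_eq, ← mul_assoc, h, zero_mul]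
  have : star c * c = 0 := by rw [hc.star_eq, hcc]
  exact (CStarRing.star_mul_self_eq_zero_iff c).mp this

lemma CFC.negPart_mul_mul_negPart {B : Type*} [NonUnitalCStarAlgebra B] {d : B}
    (hd : IsSelfAdjoint d) : d⁻ * d * d⁻ = -(d⁻ * d⁻ * d⁻) := by
  calc d⁻ * d * d⁻ = d⁻ * (d⁺ - d⁻) * d⁻ := by rw [CFC.posPart_sub_negPart d hd]
    _ = -(d⁻ * d⁻ * d⁻) := by rw [mul_sub, CFC.negPart_mul_posPart, zero_sub, neg_mul]

namespace CStarModule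

variable {B E : Type*} [NonUnitalCStarAlgebra B] [PartialOrder B] [AddCommGroup E] [Module ℂ E]
  [SMul B E] [Norm E] [CStarModule B E]

variable (B) in
def IsAdjointPair (T T' : E → E) : Prop := ∀ x y, ⟪T x, y⟫_B = ⟪x, T' y⟫_B

lemma ext_inner_left {w w' : E} (h : ∀ g, ⟪w, g⟫_B = ⟪w', g⟫_B) : w = w' := by
  rw [← sub_eq_zero, ← inner_self (A := B), inner_sub_left, h, sub_self]

namespace IsAdjointPair

variable {T T' C C' : E → E}

lemma symm (h : IsAdjointPair B T T') : IsAdjointPair B T' T := fun x y => by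
  rw [← star_inner y, ← h, star_inner]

lemma map_smul (h : IsAdjointPair B T T') (b : B) (x : E) : T (b • x) = b • T x :=
  ext_inner_left fun g => by rw [h, inner_op_smul_left, inner_op_smul_left, h]

lemma adjoint_comm_of_comm (hT : IsAdjointPair B T T') (hC : IsAdjointPair B C C')
    (hTC : ∀ x, T (C x) = C (T x)) (y : E) : T' (C' y) = C' (T' y) :=
  ext_inner_left fun g => by
    rw [hT.symm, hC.symm, ← hTC, ← hT.symm, ← hC.symm]

lemma proj_adjoint_proj_eq (hT : IsAdjointPair B T T') {P Q : E → E} (hP : IsAdjointPair B P P)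
    (hQ : IsAdjointPair B Q Q) (hQQ : ∀ x, Q (Q x) = Q x) (hrange : ∀ x, T (P x) ∈ Set.range Q)
    (y : E) : P (T' (Q y)) = P (T' y) := by
  have hfix : ∀ x, Q (T (P x)) = T (P x) := fun x => by
    obtain ⟨w, hw⟩ := hrange x
    rw [← hw, hQQ]
  exact ext_inner_left fun g => by rw [hP, hT.symm, hQ, hfix, ← hT.symm, ← hP]

variable [StarOrderedRing B] {M : ℝ}

lemma norm_adjoint_le (hT : IsAdjointPair B T T') (hM : ∀ x, ‖T x‖ ≤ M * ‖x‖) (y : E) :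
    ‖T' y‖ ≤ M * ‖y‖ := by
  rcases (CStarModule.norm_nonneg B (x := T' y)).eq_or_lt with h0 | hpos
  · rw [← h0]
    exact (CStarModule.norm_nonneg B).trans (hM y)
  · refine le_of_mul_le_mul_right ?_ hpos
    calc ‖T' y‖ * ‖T' y‖ = ‖⟪y, T (T' y)⟫_B‖ := by rw [← sq, norm_sq_eq B, hT.symm]
      _ ≤ ‖y‖ * ‖T (T' y)‖ := norm_inner_le E
      _ ≤ ‖y‖ * (M * ‖T' y‖) := mul_le_mul_of_nonneg_left (hM _) (CStarModule.norm_nonneg B)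
      _ = M * ‖y‖ * ‖T' y‖ := by ring

-- Conjugating `d = (M² + ε) ⟪x, x⟫ - ⟪T x, T x⟫` by its negative part `c` gives
-- `⟪T (c • x), T (c • x)⟫ = (M² + ε) ⟪c • x, c • x⟫ + c³`; comparing norms forces `c • x = 0`,
-- hence `c³ = 0`, `c = 0` and `d ≥ 0`.
lemma inner_map_self_le_add (hT : IsAdjointPair B T T') (hM : ∀ x, ‖T x‖ ≤ M * ‖x‖) (x : E)
    {ε : ℝ} (hε : 0 < ε) : ⟪T x, T x⟫_B ≤ (M ^ 2 + ε) • ⟪x, x⟫_B := by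
  set d := (M ^ 2 + ε) • ⟪x, x⟫_B - ⟪T x, T x⟫_B with hd_def
  have hd : IsSelfAdjoint d :=
    ((IsSelfAdjoint.all _).smul isSelfAdjoint_inner_self).sub isSelfAdjoint_inner_self
  set c := d⁻
  have hc : 0 ≤ c := CFC.negPart_nonneg d
  have hcx : ⟪c • x, c • x⟫_B = c * ⟪x, x⟫_B * c := by
    simp [hc.isSelfAdjoint.star_eq, mul_assoc]
  have hconj : ⟪T (c • x), T (c • x)⟫_B = (M ^ 2 + ε) • ⟪c • x, c • x⟫_B + c * c * c := calc
    ⟪T (c • x), T (c • x)⟫_B = c * ⟪T x, T x⟫_B * c := by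
      simp [hT.map_smul, hc.isSelfAdjoint.star_eq, mul_assoc]
    _ = c * ((M ^ 2 + ε) • ⟪x, x⟫_B) * c - c * d * c := by
      rw [hd_def, mul_sub, sub_mul, sub_sub_cancel]
    _ = (M ^ 2 + ε) • ⟪c • x, c • x⟫_B + c * c * c := by
      rw [CFC.negPart_mul_mul_negPart hd, sub_neg_eq_add, hcx, mul_smul_comm, smul_mul_assoc]
  have hnorm : (M ^ 2 + ε) * ‖c • x‖ ^ 2 ≤ M ^ 2 * ‖c • x‖ ^ 2 := calc
    (M ^ 2 + ε) * ‖c • x‖ ^ 2 = ‖(M ^ 2 + ε) • ⟪c • x, c • x⟫_B‖ := by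
      rw [norm_sq_eq B (x := c • x), norm_smul, Real.norm_of_nonneg (by positivity)]
    _ ≤ ‖⟪T (c • x), T (c • x)⟫_B‖ :=
      CStarAlgebra.norm_le_norm_of_nonneg_of_le (smul_nonneg (by positivity) inner_self_nonneg)
        (hconj ▸ le_add_of_nonneg_right (conjugate_nonneg_of_nonneg hc hc))
    _ = ‖T (c • x)‖ ^ 2 := (norm_sq_eq B).symm
    _ ≤ (M * ‖c • x‖) ^ 2 := pow_le_pow_left₀ (CStarModule.norm_nonneg B) (hM _) 2
    _ = M ^ 2 * ‖c • x‖ ^ 2 := mul_pow _ _ _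
  have hcx_norm : ‖c • x‖ = 0 := by
    have : ‖c • x‖ ^ 2 ≤ 0 := by nlinarith
    exact pow_eq_zero_iff two_ne_zero |>.mp (le_antisymm this (sq_nonneg _))
  have hTcx : T (c • x) = 0 := (norm_zero_iff B _).mp <|
    le_antisymm (by simpa [hcx_norm] using hM (c • x)) (CStarModule.norm_nonneg B)
  have hccc : c * c * c = 0 := by
    rwa [hTcx, (norm_zero_iff B _).mp hcx_norm, inner_zero_left, smul_zero,
      zero_add, eq_comm] at hconj
  have hd_nonneg : 0 ≤ d :=
    (CFC.negPart_eq_zero_iff d hd).mp (hc.isSelfAdjoint.eq_zero_of_mul_mul_self_eq_zero hccc)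
  exact sub_nonneg.mp hd_nonneg

lemma inner_map_self_le (hT : IsAdjointPair B T T') (hM : ∀ x, ‖T x‖ ≤ M * ‖x‖) (x : E) :
    ⟪T x, T x⟫_B ≤ M ^ 2 • ⟪x, x⟫_B := by
  have hlim : Tendsto (fun ε : ℝ => (M ^ 2 + ε) • ⟪x, x⟫_B) (𝓝[>] 0) (𝓝 (M ^ 2 • ⟪x, x⟫_B)) := by
    have : Continuous fun ε : ℝ => (M ^ 2 + ε) • ⟪x, x⟫_B := by fun_prop
    simpa using (this.tendsto 0).mono_left nhdsWithin_le_nhds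
  exact ge_of_tendsto hlim <|
    eventually_nhdsWithin_of_forall fun ε hε => hT.inner_map_self_le_add hM x hε

end IsAdjointPair

end CStarModule

lemma CStarModule.IsAdjointPair.of_cStarModuleOld {B E : Type*} [NonUnitalCStarAlgebra B]
    [PartialOrder B] [AddCommGroup E] [Module ℂ E] [SMul Bᵐᵒᵖ E] [Norm E] [CStarModuleOld B E]
    {T T' : E → E}
    (h : ∀ x y, inner B (T x) y = inner B x (T' y)) : IsAdjointPair Bᵐᵒᵖ T T' :=
  fun x y => congrArg op (h x y)

theorem controlled_K_g_fusion_frame_image_general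
    (C C' : H →L[ℂ] H) (P : J → H →L[ℂ] H) (Λ : ∀ j, H →L[ℂ] Hs j)
    (v : J → A)
    (hP_sa : ∀ (j) (f g : H), (inner A (P j f) g : A) = inner A f (P j g))
    (hC_sa : ∀ f g : H, (inner A (C f) g : A) = inner A f (C g))
    (hC'_sa : ∀ f g : H, (inner A (C' f) g : A) = inner A f (C' g))
    (Kad : H →L[ℂ] H)
    (a b : ℝ) (ha : 0 < a) (hb : 0 < b)
    (hsum : ∀ f : H, Summable fun j =>
      v j * v j * (inner A (Λ j (P j (C f))) (Λ j (P j (C' f))) : A))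
    (hframe : ∀ f : H,
      a • (inner A (Kad f) (Kad f) : A) ≤
        (∑' j, v j * v j * (inner A (Λ j (P j (C f))) (Λ j (P j (C' f))) : A)) ∧
      (∑' j, v j * v j * (inner A (Λ j (P j (C f))) (Λ j (P j (C' f))) : A)) ≤
        b • (inner A f f : A))
    (U Uad : H →L[ℂ] H)
    (hUad : ∀ x y : H, (inner A (U x) y : A) = inner A x (Uad y))
    (hUC : U.comp C = C.comp U) (hUC' : U.comp C' = C'.comp U)
    (Q : J → H →L[ℂ] H)
    (hQ_idem : ∀ j, (Q j).comp (Q j) = Q j)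
    (hQ_sa : ∀ (j) (f g : H), (inner A (Q j f) g : A) = inner A f (Q j g))
    (hQ_range : ∀ j, Set.range (Q j) = U '' Set.range (P j)) :
    ∀ f : H,
      Summable (fun j => v j * v j *
        (inner A (Λ j (P j (Uad (Q j (C f))))) (Λ j (P j (Uad (Q j (C' f))))) : A)) ∧
      (a / ‖U‖ ^ 2) • (inner A (U (Kad (Uad f))) (U (Kad (Uad f))) : A) ≤
        (∑' j, v j * v j *
          (inner A (Λ j (P j (Uad (Q j (C f))))) (Λ j (P j (Uad (Q j (C' f))))) : A)) ∧
      (∑' j, v j * v j *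
        (inner A (Λ j (P j (Uad (Q j (C f))))) (Λ j (P j (Uad (Q j (C' f))))) : A)) ≤
        (b * ‖U‖ ^ 2) • (inner A f f : A) := by
  intro f
  have hU : IsAdjointPair Aᵐᵒᵖ U Uad := .of_cStarModuleOld hUad
  have hU_le : ∀ x, inner A (U x) (U x) ≤ ‖U‖ ^ 2 • inner A x x :=
    hU.inner_map_self_le U.le_opNorm
  have hUad_le : ∀ x, inner A (Uad x) (Uad x) ≤ ‖U‖ ^ 2 • inner A x x :=
    hU.symm.inner_map_self_le (hU.norm_adjoint_le U.le_opNorm)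
  have hUad_comm : ∀ D : H →L[ℂ] H, (∀ f g, inner A (D f) g = inner A f (D g)) →
      U.comp D = D.comp U → ∀ g, Uad (D g) = D (Uad g) := fun D hD hUD =>
    hU.adjoint_comm_of_comm (.of_cStarModuleOld hD) fun x => congr($hUD x)
  have hproj : ∀ j g, P j (Uad (Q j g)) = P j (Uad g) := fun j =>
    hU.proj_adjoint_proj_eq (.of_cStarModuleOld (hP_sa j)) (.of_cStarModuleOld (hQ_sa j))
      (fun x => congr($(hQ_idem j) x)) fun x => hQ_range j ▸ ⟨P j x, ⟨x, rfl⟩, rfl⟩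
  simp only [hproj, hUad_comm C hC_sa hUC, hUad_comm C' hC'_sa hUC']
  obtain ⟨hlower, hupper⟩ := hframe (Uad f)
  refine ⟨hsum (Uad f), ?_, ?_⟩
  · calc (a / ‖U‖ ^ 2) • inner A (U (Kad (Uad f))) (U (Kad (Uad f)))
        ≤ (a / ‖U‖ ^ 2 * ‖U‖ ^ 2) • inner A (Kad (Uad f)) (Kad (Uad f)) := by
          rw [mul_smul]; exact smul_le_smul_of_nonneg_left (hU_le _) (by positivity)
      _ ≤ a • inner A (Kad (Uad f)) (Kad (Uad f)) :=
          smul_le_smul_of_nonneg_right (by rcases eq_or_ne ‖U‖ 0 with h | h <;> simp [h, ha.le])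
            CStarModuleOld.inner_self_nonneg
      _ ≤ _ := hlower
  · calc _ ≤ b • inner A (Uad f) (Uad f) := hupper
      _ ≤ (b * ‖U‖ ^ 2) • inner A f f := by
          rw [mul_smul]; exact smul_le_smul_of_nonneg_left (hUad_le f) hb.le

/-- if `Λ_{CC'}` is a `(C,C')`-controlled `K`-g-fusion frame with bounds
`A, B`, `U` invertible with `U*U W_j ⊆ W_j` and commuting with `C, C'`, then
`{UW_j, Λ_jP_{W_j}U*, v_j}` is a `(C,C')`-controlled `UKU*`-g-fusion frame with
bounds `A/‖U‖²` and `B‖U‖²`. -/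
theorem controlled_K_g_fusion_frame_image
    (C C' : H →L[ℂ] H) (P : J → H →L[ℂ] H) (Λ : ∀ j, H →L[ℂ] Hs j)
    (Λad : ∀ j, Hs j →L[ℂ] H) (v : J → A)
    (hΛad : ∀ (j) (x : H) (u : Hs j), (inner A (Λ j x) u : A) = inner A x (Λad j u))
    (hP_idem : ∀ j, (P j).comp (P j) = P j)
    (hP_sa : ∀ (j) (f g : H), (inner A (P j f) g : A) = inner A f (P j g))
    (hC_sa : ∀ f g : H, (inner A (C f) g : A) = inner A f (C g))
    (hC'_sa : ∀ f g : H, (inner A (C' f) g : A) = inner A f (C' g))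
    (hC_pos : ∀ f : H, 0 ≤ (inner A (C f) f : A))
    (hC'_pos : ∀ f : H, 0 ≤ (inner A (C' f) f : A))
    (hC_inv : Function.Bijective C) (hC'_inv : Function.Bijective C')
    (hCC' : C.comp C' = C'.comp C)
    (hCT : ∀ j, C.comp ((P j).comp ((Λad j).comp ((Λ j).comp (P j))))
      = ((P j).comp ((Λad j).comp ((Λ j).comp (P j)))).comp C)
    (hC'T : ∀ j, C'.comp ((P j).comp ((Λad j).comp ((Λ j).comp (P j))))
      = ((P j).comp ((Λad j).comp ((Λ j).comp (P j)))).comp C')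
    (hv_pos : ∀ j, 0 ≤ v j) (hv_inv : ∀ j, IsUnit (v j))
    (hv_central : ∀ (j) (a : A), Commute (v j) a)
    (K Kad : H →L[ℂ] H)
    (hKad : ∀ x y : H, (inner A (K x) y : A) = inner A x (Kad y))
    (a b : ℝ) (ha : 0 < a) (hb : 0 < b)
    (hsum : ∀ f : H, Summable fun j =>
      v j * v j * (inner A (Λ j (P j (C f))) (Λ j (P j (C' f))) : A))
    (hframe : ∀ f : H,
      a • (inner A (Kad f) (Kad f) : A) ≤
        (∑' j, v j * v j * (inner A (Λ j (P j (C f))) (Λ j (P j (C' f))) : A)) ∧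
      (∑' j, v j * v j * (inner A (Λ j (P j (C f))) (Λ j (P j (C' f))) : A)) ≤
        b • (inner A f f : A))
    (U Uad : H →L[ℂ] H)
    (hUad : ∀ x y : H, (inner A (U x) y : A) = inner A x (Uad y))
    (hU_inv : Function.Bijective U)
    (hUW : ∀ (j) (x : H), x ∈ Set.range (P j) → Uad (U x) ∈ Set.range (P j))
    (hUC : U.comp C = C.comp U) (hUC' : U.comp C' = C'.comp U)
    (Q : J → H →L[ℂ] H)
    (hQ_idem : ∀ j, (Q j).comp (Q j) = Q j)
    (hQ_sa : ∀ (j) (f g : H), (inner A (Q j f) g : A) = inner A f (Q j g))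
    (hQ_range : ∀ j, Set.range (Q j) = U '' Set.range (P j)) :
    ∀ f : H,
      Summable (fun j => v j * v j *
        (inner A (Λ j (P j (Uad (Q j (C f))))) (Λ j (P j (Uad (Q j (C' f))))) : A)) ∧
      (a / ‖U‖ ^ 2) • (inner A (U (Kad (Uad f))) (U (Kad (Uad f))) : A) ≤
        (∑' j, v j * v j *
          (inner A (Λ j (P j (Uad (Q j (C f))))) (Λ j (P j (Uad (Q j (C' f))))) : A)) ∧
      (∑' j, v j * v j *
        (inner A (Λ j (P j (Uad (Q j (C f))))) (Λ j (P j (Uad (Q j (C' f))))) : A)) ≤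
        (b * ‖U‖ ^ 2) • (inner A f f : A) :=
  controlled_K_g_fusion_frame_image_general C C' P Λ v hP_sa hC_sa hC'_sa Kad a b ha hb hsum hframe
    U Uad hUad hUC hUC' Q hQ_idem hQ_sa hQ_range
end
end

section
/- Let U be an invertible adjointable operator on H with U*U W_j ⊆ W_j for all j and U commuting with C and C'. If {UW_j, Λ_j P_{W_j} U*, v_j}_{j∈J} is a (C,C')-controlled K-g-fusion frame for H with bounds A, B, then {W_j, Λ_j, v_j}_{j∈J} is a (C,C')-controlled (U⁻¹KU)-g-fusion frame for H with bounds A/‖U‖² and B‖U⁻¹‖². -/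
/-!
Substituting `(U⁻¹)* f` for `f` in the frame inequalities of `{UW_j, Λ_j P_{W_j} U*, v_j}` turns
each of its terms into the corresponding term of `{W_j, Λ_j, v_j}`, because
`P_{W_j} U* P_{UW_j} = P_{W_j} U*`, `U*` commutes with `C` and `C'`, and `U* (U⁻¹)* = 1`.
The bounds then follow from `⟪T* x, T* x⟫ ≤ ‖T‖² ⟪x, x⟫` for `T = U` and `T = U⁻¹`.

That inequality is proved without the C⋆-algebra of adjointable operators: for a self-adjoint
contraction `S` the elements `w n = ⟪x, Sⁿ x⟫` are bounded above and satisfy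
`2 w n ≤ w 0 + w (2n)` (positivity of `⟪x - Sⁿ x, x - Sⁿ x⟫`), so
`2ᵏ (w 1 - w 0) ≤ w (2ᵏ) - w 0` for all `k`, forcing `w 1 ≤ w 0`; apply this to `S = T T* / ‖T‖²`.
-/

open scoped RightActions

noncomputable section

variable {A : Type*} [CStarAlgebra A] [PartialOrder A] [StarOrderedRing A]
variable {H : Type*} [NormedAddCommGroup H] [NormedSpace ℂ H] [SMul Aᵐᵒᵖ H] [CStarModuleOld A H]
variable {J : Type*} {Hs : J → Type*} [∀ j, NormedAddCommGroup (Hs j)]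
  [∀ j, NormedSpace ℂ (Hs j)] [∀ j, SMul Aᵐᵒᵖ (Hs j)] [∀ j, CStarModuleOld A (Hs j)]

open Filter Topology

section OrderedGroup

variable {M : Type*} [AddCommGroup M] [PartialOrder M]

lemma two_pow_nsmul_sub_le_of_add_self_le [IsOrderedAddMonoid M] (w : ℕ → M)
    (hmid : ∀ n, w n + w n ≤ w 0 + w (2 * n)) (k : ℕ) :
    2 ^ k • (w 1 - w 0) ≤ w (2 ^ k) - w 0 := by
  induction k with
  | zero => simp
  | succ k ih =>
    calc 2 ^ (k + 1) • (w 1 - w 0) = 2 ^ k • (w 1 - w 0) + 2 ^ k • (w 1 - w 0) := by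
          rw [pow_succ, mul_nsmul', two_nsmul, nsmul_add]
      _ ≤ (w (2 ^ k) + w (2 ^ k)) - (w 0 + w 0) := by
          refine (add_le_add ih ih).trans_eq ?_
          abel
      _ ≤ (w 0 + w (2 ^ (k + 1))) - (w 0 + w 0) := by
          rw [pow_succ']
          exact sub_le_sub_right (hmid _) _
      _ = w (2 ^ (k + 1)) - w 0 := by abel

variable [Module ℝ M] [PosSMulMono ℝ M] [TopologicalSpace M] [ContinuousSMul ℝ M]
  [ClosedIciTopology M]

lemma nonpos_of_forall_two_pow_nsmul_le {d e : M} (h : ∀ k : ℕ, 2 ^ k • d ≤ e) :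
    d ≤ 0 := by
  have hlim : Tendsto (fun k : ℕ => (2⁻¹ : ℝ) ^ k • e) atTop (𝓝 0) := by
    simpa using
      (tendsto_pow_atTop_nhds_zero_of_lt_one (by norm_num : (0 : ℝ) ≤ 2⁻¹) (by norm_num)).smul_const e
  refine ge_of_tendsto' hlim fun k => ?_
  calc d = (2⁻¹ : ℝ) ^ k • (2 ^ k • d) := by
        rw [← Nat.cast_smul_eq_nsmul ℝ, smul_smul, Nat.cast_pow, Nat.cast_ofNat, ← mul_pow,
          inv_mul_cancel₀ two_ne_zero, one_pow, one_smul]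
    _ ≤ (2⁻¹ : ℝ) ^ k • e := smul_le_smul_of_nonneg_left (h k) (by positivity)

lemma apply_one_le_apply_zero_of_add_self_le [IsOrderedAddMonoid M] (w : ℕ → M) (c : M)
    (hmid : ∀ n, w n + w n ≤ w 0 + w (2 * n)) (hbdd : ∀ n, w n ≤ c) : w 1 ≤ w 0 :=
  sub_nonpos.mp <| nonpos_of_forall_two_pow_nsmul_le fun k =>
    (two_pow_nsmul_sub_le_of_add_self_le w hmid k).trans (sub_le_sub_right (hbdd _) _)

end OrderedGroup

namespace CStarModuleOld

variable {E : Type*} [NormedAddCommGroup E] [NormedSpace ℂ E] [SMul Aᵐᵒᵖ E] [CStarModuleOld A E]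

section
omit [StarOrderedRing A]

lemma inner_sub_right {x y z : E} : inner A x (y - z) = inner A x y - inner A x z :=
  map_sub (AddMonoidHom.mk' (fun y => inner A x y) fun _ _ => inner_add_right) y z

lemma inner_sub_left {x y z : E} : inner A (x - y) z = inner A x z - inner A y z := by
  rw [← star_inner z, inner_sub_right, star_sub, star_inner, star_inner]

lemma inner_zero_right {x : E} : inner A x (0 : E) = 0 := by
  simpa using inner_sub_right (A := A) (x := x) (y := (0 : E)) (z := 0)

lemma inner_zero_left {y : E} : inner A (0 : E) y = 0 := by
  simpa using inner_sub_left (A := A) (x := (0 : E)) (y := 0) (z := y)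

lemma inner_op_smul_left {a : A} {x y : E} : inner A (x <• a) y = star a * inner A x y := by
  rw [← star_inner y, inner_op_smul_right, star_mul, star_inner]

lemma inner_smul_right_real {r : ℝ} {x y : E} : inner A x (r • y) = r • inner A x y := by
  rw [show r • y = (r : ℂ) • y by simp, inner_smul_right_complex]
  simp

lemma inner_smul_left_real {r : ℝ} {x y : E} : inner A (r • x) y = r • inner A x y := by
  rw [← star_inner y, inner_smul_right_real, star_smul, star_inner, star_trivial]

lemma norm_sq_eq_norm_inner_self (x : E) : ‖x‖ ^ 2 = ‖inner A x x‖ := by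
  rw [norm_eq_sqrt_norm_inner_self (A := A) x, Real.sq_sqrt (norm_nonneg _)]

lemma ext_inner_left {x y : E} (h : ∀ z : E, inner A x z = inner A y z) : x = y := by
  rw [← sub_eq_zero, ← inner_self (A := A), inner_sub_left, h, sub_self]

end

lemma inner_mul_inner_swap_le (x y : E) :
    inner A y x * inner A x y ≤ ‖x‖ ^ 2 • inner A y y := by
  rcases eq_or_ne x 0 with rfl | hx
  · simp [inner_zero_left]
  have hs : 0 < ‖x‖ ^ 2 := by positivity
  have key : 0 ≤ ‖x‖ ^ 2 • (‖x‖ ^ 2 • inner A y y - inner A y x * inner A x y) :=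
    calc (0 : A)
        ≤ inner A (x <• inner A x y - ‖x‖ ^ 2 • y) (x <• inner A x y - ‖x‖ ^ 2 • y) :=
          inner_self_nonneg
      _ = star (inner A x y) * inner A x x * inner A x y
            - ‖x‖ ^ 2 • (inner A y x * inner A x y) - ‖x‖ ^ 2 • (inner A y x * inner A x y)
            + ‖x‖ ^ 2 • ‖x‖ ^ 2 • inner A y y := by
          rw [inner_sub_left, inner_sub_right, inner_sub_right, inner_op_smul_left,
            inner_op_smul_left, inner_op_smul_right, inner_op_smul_right, inner_smul_left_real,
            inner_smul_left_real, inner_smul_right_real, inner_smul_right_real, star_inner,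
            mul_assoc, mul_smul_comm, smul_mul_assoc]
          abel
      _ ≤ ‖x‖ ^ 2 • (inner A y x * inner A x y)
            - ‖x‖ ^ 2 • (inner A y x * inner A x y) - ‖x‖ ^ 2 • (inner A y x * inner A x y)
            + ‖x‖ ^ 2 • ‖x‖ ^ 2 • inner A y y := by
          gcongr
          rw [norm_sq_eq_norm_inner_self (A := A), ← star_inner x y]
          exact CStarAlgebra.star_left_conjugate_le_norm_smul (hb := star_inner x x)
      _ = ‖x‖ ^ 2 • (‖x‖ ^ 2 • inner A y y - inner A y x * inner A x y) := by
          rw [smul_sub]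
          abel
  exact sub_nonneg.mp (nonneg_of_smul_nonneg_of_pos_left key hs)

lemma norm_inner_le (x y : E) : ‖inner A x y‖ ≤ ‖x‖ * ‖y‖ := by
  refine (pow_le_pow_iff_left₀ (norm_nonneg _) (by positivity) two_ne_zero).mp ?_
  calc ‖inner A x y‖ ^ 2 = ‖inner A y x * inner A x y‖ := by
        rw [← star_inner x y, CStarRing.norm_star_mul_self, sq]
    _ ≤ ‖‖x‖ ^ 2 • inner A y y‖ := CStarAlgebra.norm_le_norm_of_nonneg_of_le
        (by rw [← star_inner x y]; exact star_mul_self_nonneg _) (inner_mul_inner_swap_le x y)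
    _ = (‖x‖ * ‖y‖) ^ 2 := by
        rw [norm_smul, ← norm_sq_eq_norm_inner_self (A := A) y, Real.norm_of_nonneg (by positivity),
          mul_pow]

variable (A) in
def IsAdjointPair (T T' : E →L[ℂ] E) : Prop :=
  ∀ x y : E, inner A (T x) y = inner A x (T' y)

namespace IsAdjointPair

variable {S S' T T' : E →L[ℂ] E}

section
omit [StarOrderedRing A]

lemma symm (h : IsAdjointPair A T T') : IsAdjointPair A T' T := fun x y => by
  rw [← star_inner y, ← h, star_inner]

lemma one : IsAdjointPair A (1 : E →L[ℂ] E) 1 :=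
  fun _ _ => rfl

lemma comp (hS : IsAdjointPair A S S') (hT : IsAdjointPair A T T') :
    IsAdjointPair A (S.comp T) (T'.comp S') := fun x y => by
  rw [ContinuousLinearMap.comp_apply, hS, hT, ContinuousLinearMap.comp_apply]

lemma mul (hS : IsAdjointPair A S S') (hT : IsAdjointPair A T T') :
    IsAdjointPair A (S * T) (T' * S') :=
  hS.comp hT

lemma pow (hT : IsAdjointPair A T T) (n : ℕ) : IsAdjointPair A (T ^ n) (T ^ n) := by
  induction n with
  | zero => exact one
  | succ n ih => simpa only [← pow_succ, ← pow_succ'] using ih.mul hT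

lemma real_smul (h : IsAdjointPair A T T') (r : ℝ) : IsAdjointPair A (r • T) (r • T') :=
  fun x y => by
    rw [smul_apply, smul_apply, inner_smul_left_real, inner_smul_right_real, h]

lemma unique (h₁ : IsAdjointPair A T S) (h₂ : IsAdjointPair A T S') : S = S' := by
  ext y
  exact ext_inner_left (A := A) fun x => by rw [h₁.symm, h₂.symm]

lemma commute (hS : IsAdjointPair A S S') (hT : IsAdjointPair A T T') (h : Commute S T) :
    Commute S' T' :=
  (hT.mul hS).unique (h.eq ▸ hS.mul hT)

lemma mul_eq_one (hS : IsAdjointPair A S S') (hT : IsAdjointPair A T T') (h : S * T = 1) :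
    T' * S' = 1 :=
  (h ▸ hS.mul hT).unique one

lemma comp_comp_eq_of_apply_mem_range {P Q : E →L[ℂ] E} (hT : IsAdjointPair A T T')
    (hP : IsAdjointPair A P P) (hQ : IsAdjointPair A Q Q) (hQQ : Q.comp Q = Q)
    (hTP : ∀ x, T (P x) ∈ Set.range Q) : P.comp (T'.comp Q) = P.comp T' := by
  have hQTP : Q.comp (T.comp P) = T.comp P := by
    ext x
    obtain ⟨y, hy⟩ := hTP x
    simp only [ContinuousLinearMap.comp_apply, ← hy]
    exact DFunLike.congr_fun hQQ y
  exact (hQTP ▸ hQ.comp (hT.comp hP)).unique (hT.comp hP)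

end

lemma norm_apply_le (h : IsAdjointPair A T T') (x : E) : ‖T' x‖ ≤ ‖T‖ * ‖x‖ := by
  rcases (norm_nonneg (T' x)).eq_or_lt with hx | hx
  · rw [← hx]
    positivity
  refine le_of_mul_le_mul_right ?_ hx
  calc ‖T' x‖ * ‖T' x‖ = ‖inner A x (T (T' x))‖ := by
        rw [← sq, norm_sq_eq_norm_inner_self (A := A), h.symm]
    _ ≤ ‖x‖ * (‖T‖ * ‖T' x‖) := (norm_inner_le x _).trans (by gcongr; exact T.le_opNorm _)
    _ = ‖T‖ * ‖x‖ * ‖T' x‖ := by ring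

lemma norm_comp_le (h : IsAdjointPair A T T') : ‖T.comp T'‖ ≤ ‖T‖ ^ 2 :=
  (T.comp T').opNorm_le_bound (by positivity) fun x =>
    calc ‖T (T' x)‖ ≤ ‖T‖ * ‖T' x‖ := T.le_opNorm _
      _ ≤ ‖T‖ * (‖T‖ * ‖x‖) := by gcongr; exact h.norm_apply_le x
      _ = ‖T‖ ^ 2 * ‖x‖ := by ring

lemma inner_apply_le_inner_self (hS : IsAdjointPair A S S) (hS1 : ‖S‖ ≤ 1) (x : E) :
    inner A x (S x) ≤ inner A x x := by
  set w : ℕ → A := fun n => inner A x ((S ^ n) x)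
  have hnorm : ∀ n, ‖(S ^ n) x‖ ≤ ‖x‖ := by
    intro n
    induction n with
    | zero => simp
    | succ n ih =>
      rw [pow_succ', mul_apply_eq_comp]
      calc ‖S ((S ^ n) x)‖ ≤ ‖S‖ * ‖(S ^ n) x‖ := S.le_opNorm _
        _ ≤ 1 * ‖x‖ := mul_le_mul hS1 ih (norm_nonneg _) zero_le_one
        _ = ‖x‖ := one_mul _
  have hmid : ∀ n, w n + w n ≤ w 0 + w (2 * n) := by
    intro n
    have hsq : inner A ((S ^ n) x) ((S ^ n) x) = w (2 * n) := by
      rw [hS.pow n, two_mul]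
      simp only [w, pow_add, mul_apply_eq_comp]
    have h0 := inner_self_nonneg (A := A) (x := x - (S ^ n) x)
    rw [inner_sub_left, inner_sub_right, inner_sub_right, hsq, hS.pow n] at h0
    refine sub_nonneg.mp (h0.trans_eq ?_)
    simp only [w, pow_zero, one_apply_eq_self]
    abel
  have hbdd : ∀ n, w n ≤ ‖x‖ ^ 2 • 1 := by
    intro n
    have hsa : IsSelfAdjoint (w n) := by
      rw [IsSelfAdjoint, star_inner, hS.pow n]
    calc w n ≤ algebraMap ℝ A ‖w n‖ := hsa.le_algebraMap_norm_self
      _ = ‖w n‖ • 1 := Algebra.algebraMap_eq_smul_one _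
      _ ≤ ‖x‖ ^ 2 • 1 := by
          refine smul_le_smul_of_nonneg_right ?_ zero_le_one
          exact (norm_inner_le x _).trans (by rw [sq]; gcongr; exact hnorm n)
  simpa [w] using apply_one_le_apply_zero_of_add_self_le w _ hmid hbdd

lemma inner_le_norm_sq_smul (h : IsAdjointPair A T T') (x : E) :
    inner A (T' x) (T' x) ≤ ‖T‖ ^ 2 • inner A x x := by
  rcases eq_or_ne ‖T‖ 0 with hT | hT
  · rw [h.symm, norm_eq_zero.mp hT]
    simp [inner_zero_right]
  have hc : 0 < ‖T‖ ^ 2 := by positivity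
  have hS1 : ‖(‖T‖ ^ 2)⁻¹ • T.comp T'‖ ≤ 1 := by
    rw [norm_smul, Real.norm_of_nonneg (by positivity)]
    exact inv_mul_le_one_of_le₀ h.norm_comp_le hc.le
  have key := ((h.comp h.symm).real_smul (‖T‖ ^ 2)⁻¹).inner_apply_le_inner_self hS1 x
  rw [smul_apply, ContinuousLinearMap.comp_apply, inner_smul_right_real, ← h.symm] at key
  calc inner A (T' x) (T' x) = ‖T‖ ^ 2 • (‖T‖ ^ 2)⁻¹ • inner A (T' x) (T' x) := by
        rw [smul_smul, mul_inv_cancel₀ hc.ne', one_smul]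
    _ ≤ ‖T‖ ^ 2 • inner A x x := smul_le_smul_of_nonneg_left key hc.le

end IsAdjointPair

end CStarModuleOld

open CStarModuleOld

theorem controlled_K_g_fusion_frame_preimage_general
    (C C' : H →L[ℂ] H) (P : J → H →L[ℂ] H) (Λ : ∀ j, H →L[ℂ] Hs j)
    (v : J → A)
    (hP_sa : ∀ (j) (f g : H), (inner A (P j f) g : A) = inner A f (P j g))
    (hC_sa : ∀ f g : H, (inner A (C f) g : A) = inner A f (C g))
    (hC'_sa : ∀ f g : H, (inner A (C' f) g : A) = inner A f (C' g))
    (Kad : H →L[ℂ] H)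
    (U Uad : H →L[ℂ] H)
    (hUad : ∀ x y : H, (inner A (U x) y : A) = inner A x (Uad y))
    (Uinv Uinvad : H →L[ℂ] H)
    (hUinv₂ : Uinv.comp U = ContinuousLinearMap.id ℂ H)
    (hUinvad : ∀ x y : H, (inner A (Uinv x) y : A) = inner A x (Uinvad y))
    (hUC : U.comp C = C.comp U) (hUC' : U.comp C' = C'.comp U)
    (Q : J → H →L[ℂ] H)
    (hQ_idem : ∀ j, (Q j).comp (Q j) = Q j)
    (hQ_sa : ∀ (j) (f g : H), (inner A (Q j f) g : A) = inner A f (Q j g))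
    (hQ_range : ∀ j, Set.range (Q j) = U '' Set.range (P j))
    (a b : ℝ) (ha : 0 < a) (hb : 0 < b)
    (hsumQ : ∀ f : H, Summable fun j => v j * v j *
      (inner A (Λ j (P j (Uad (Q j (C f))))) (Λ j (P j (Uad (Q j (C' f))))) : A))
    (hframeQ : ∀ f : H,
      a • (inner A (Kad f) (Kad f) : A) ≤
        (∑' j, v j * v j *
          (inner A (Λ j (P j (Uad (Q j (C f))))) (Λ j (P j (Uad (Q j (C' f))))) : A)) ∧
      (∑' j, v j * v j *
        (inner A (Λ j (P j (Uad (Q j (C f))))) (Λ j (P j (Uad (Q j (C' f))))) : A)) ≤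
        b • (inner A f f : A)) :
    ∀ f : H,
      Summable (fun j => v j * v j *
        (inner A (Λ j (P j (C f))) (Λ j (P j (C' f))) : A)) ∧
      (a / ‖U‖ ^ 2) • (inner A (Uad (Kad (Uinvad f))) (Uad (Kad (Uinvad f))) : A) ≤
        (∑' j, v j * v j * (inner A (Λ j (P j (C f))) (Λ j (P j (C' f))) : A)) ∧
      (∑' j, v j * v j * (inner A (Λ j (P j (C f))) (Λ j (P j (C' f))) : A)) ≤
        (b * ‖Uinv‖ ^ 2) • (inner A f f : A) := by
  intro f
  have hU : IsAdjointPair A U Uad := hUad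
  have hUinv : IsAdjointPair A Uinv Uinvad := hUinvad
  set g := Uinvad f
  have hUg : Uad g = f := DFunLike.congr_fun (hUinv.mul_eq_one hU hUinv₂) f
  have hterm : ∀ j (D : H →L[ℂ] H), Commute Uad D → P j (Uad (Q j (D g))) = P j (D f) := by
    intro j D hD
    calc P j (Uad (Q j (D g))) = P j (Uad (D g)) :=
          DFunLike.congr_fun (hU.comp_comp_eq_of_apply_mem_range
            (hP_sa j) (hQ_sa j) (hQ_idem j)
            fun x => hQ_range j ▸ Set.mem_image_of_mem U (Set.mem_range_self x)) (D g)
      _ = P j (D (Uad g)) := congrArg (P j) (DFunLike.congr_fun hD.eq g)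
      _ = P j (D f) := by rw [hUg]
  obtain ⟨hlow, hup⟩ := hframeQ g
  have hsum := hsumQ g
  simp only [hterm _ C (hU.commute hC_sa hUC), hterm _ C' (hU.commute hC'_sa hUC')]
    at hsum hlow hup
  refine ⟨hsum, ?_, ?_⟩
  · calc (a / ‖U‖ ^ 2) • inner A (Uad (Kad g)) (Uad (Kad g))
        ≤ (a / ‖U‖ ^ 2) • ‖U‖ ^ 2 • inner A (Kad g) (Kad g) :=
          smul_le_smul_of_nonneg_left (hU.inner_le_norm_sq_smul _) (by positivity)
      _ = (a * (‖U‖ ^ 2 / ‖U‖ ^ 2)) • inner A (Kad g) (Kad g) := by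
          rw [smul_smul, div_mul_eq_mul_div, mul_div_assoc]
      _ ≤ a • inner A (Kad g) (Kad g) :=
          smul_le_smul_of_nonneg_right (mul_le_of_le_one_right ha.le (div_self_le_one _))
            inner_self_nonneg
      _ ≤ _ := hlow
  · calc _ ≤ b • inner A g g := hup
      _ ≤ b • ‖Uinv‖ ^ 2 • inner A f f :=
          smul_le_smul_of_nonneg_left (hUinv.inner_le_norm_sq_smul f) hb.le
      _ = (b * ‖Uinv‖ ^ 2) • inner A f f := smul_smul _ _ _

/-- if `{UW_j, Λ_jP_{W_j}U*, v_j}` is a `(C,C')`-controlled `K`-g-fusion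
frame with bounds `A, B`, `U` invertible with `U*U W_j ⊆ W_j` commuting with `C, C'`,
then `{W_j, Λ_j, v_j}` is a `(C,C')`-controlled `U⁻¹KU`-g-fusion frame with bounds
`A/‖U‖²` and `B‖U⁻¹‖²`. -/
theorem controlled_K_g_fusion_frame_preimage
    (C C' : H →L[ℂ] H) (P : J → H →L[ℂ] H) (Λ : ∀ j, H →L[ℂ] Hs j)
    (Λad : ∀ j, Hs j →L[ℂ] H) (v : J → A)
    (hΛad : ∀ (j) (x : H) (u : Hs j), (inner A (Λ j x) u : A) = inner A x (Λad j u))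
    (hP_idem : ∀ j, (P j).comp (P j) = P j)
    (hP_sa : ∀ (j) (f g : H), (inner A (P j f) g : A) = inner A f (P j g))
    (hC_sa : ∀ f g : H, (inner A (C f) g : A) = inner A f (C g))
    (hC'_sa : ∀ f g : H, (inner A (C' f) g : A) = inner A f (C' g))
    (hC_pos : ∀ f : H, 0 ≤ (inner A (C f) f : A))
    (hC'_pos : ∀ f : H, 0 ≤ (inner A (C' f) f : A))
    (hC_inv : Function.Bijective C) (hC'_inv : Function.Bijective C')
    (hCC' : C.comp C' = C'.comp C)
    (hCT : ∀ j, C.comp ((P j).comp ((Λad j).comp ((Λ j).comp (P j))))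
      = ((P j).comp ((Λad j).comp ((Λ j).comp (P j)))).comp C)
    (hC'T : ∀ j, C'.comp ((P j).comp ((Λad j).comp ((Λ j).comp (P j))))
      = ((P j).comp ((Λad j).comp ((Λ j).comp (P j)))).comp C')
    (hv_pos : ∀ j, 0 ≤ v j) (hv_inv : ∀ j, IsUnit (v j))
    (hv_central : ∀ (j) (a : A), Commute (v j) a)
    (K Kad : H →L[ℂ] H)
    (hKad : ∀ x y : H, (inner A (K x) y : A) = inner A x (Kad y))
    (U Uad : H →L[ℂ] H)
    (hUad : ∀ x y : H, (inner A (U x) y : A) = inner A x (Uad y))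
    (Uinv Uinvad : H →L[ℂ] H)
    (hUinv₁ : U.comp Uinv = ContinuousLinearMap.id ℂ H)
    (hUinv₂ : Uinv.comp U = ContinuousLinearMap.id ℂ H)
    (hUinvad : ∀ x y : H, (inner A (Uinv x) y : A) = inner A x (Uinvad y))
    (hUW : ∀ (j) (x : H), x ∈ Set.range (P j) → Uad (U x) ∈ Set.range (P j))
    (hUC : U.comp C = C.comp U) (hUC' : U.comp C' = C'.comp U)
    (Q : J → H →L[ℂ] H)
    (hQ_idem : ∀ j, (Q j).comp (Q j) = Q j)
    (hQ_sa : ∀ (j) (f g : H), (inner A (Q j f) g : A) = inner A f (Q j g))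
    (hQ_range : ∀ j, Set.range (Q j) = U '' Set.range (P j))
    (a b : ℝ) (ha : 0 < a) (hb : 0 < b)
    (hsumQ : ∀ f : H, Summable fun j => v j * v j *
      (inner A (Λ j (P j (Uad (Q j (C f))))) (Λ j (P j (Uad (Q j (C' f))))) : A))
    (hframeQ : ∀ f : H,
      a • (inner A (Kad f) (Kad f) : A) ≤
        (∑' j, v j * v j *
          (inner A (Λ j (P j (Uad (Q j (C f))))) (Λ j (P j (Uad (Q j (C' f))))) : A)) ∧
      (∑' j, v j * v j *
        (inner A (Λ j (P j (Uad (Q j (C f))))) (Λ j (P j (Uad (Q j (C' f))))) : A)) ≤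
        b • (inner A f f : A)) :
    ∀ f : H,
      Summable (fun j => v j * v j *
        (inner A (Λ j (P j (C f))) (Λ j (P j (C' f))) : A)) ∧
      (a / ‖U‖ ^ 2) • (inner A (Uad (Kad (Uinvad f))) (Uad (Kad (Uinvad f))) : A) ≤
        (∑' j, v j * v j * (inner A (Λ j (P j (C f))) (Λ j (P j (C' f))) : A)) ∧
      (∑' j, v j * v j * (inner A (Λ j (P j (C f))) (Λ j (P j (C' f))) : A)) ≤
        (b * ‖Uinv‖ ^ 2) • (inner A f f : A) :=
  controlled_K_g_fusion_frame_preimage_general C C' P Λ v hP_sa hC_sa hC'_sa Kad U Uad hUad Uinv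
    Uinvad hUinv₂ hUinvad hUC hUC' Q hQ_idem hQ_sa hQ_range a b ha hb hsumQ hframeQ
end
end

section
/- Let K be an adjointable operator on H. Then Λ_{CC'} = {W_j, Λ_j, v_j} is a (C,C')-controlled K-g-fusion frame for H if and only if there exist constants A, B > 0 such that A‖K*f‖² ≤ ‖Σ_{j∈J} v_j² ⟨Λ_j P_{W_j} C f, Λ_j P_{W_j} C' f⟩‖ ≤ B‖f‖² for all f ∈ H. -/
open scoped RightActions

noncomputable section

/-- The Hilbert C⋆-module class of the older library (right `A`-action, written as a left
`Aᵐᵒᵖ`-action), restated here since Mathlib's `CStarModule` now uses a left `A`-action. -/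
class CStarModuleRight (A : outParam <| Type*) (E : Type*) [NonUnitalSemiring A] [StarRing A]
    [Module ℂ A] [AddCommGroup E] [Module ℂ E] [PartialOrder A] [SMul Aᵐᵒᵖ E] [Norm A] [Norm E]
    extends Inner A E where
  inner_add_right {x} {y} {z} : inner x (y + z) = inner x y + inner x z
  inner_self_nonneg {x} : 0 ≤ inner x x
  inner_self {x} : inner x x = 0 ↔ x = 0
  inner_op_smul_right {a : A} {x y : E} : inner x (y <• a) = inner x y * a
  inner_smul_right_complex {z : ℂ} {x} {y} : inner x (z • y) = z • inner x y
  star_inner x y : star (inner x y) = inner y x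
  norm_eq_sqrt_norm_inner_self x : ‖x‖ = √‖inner x x‖

variable {A : Type*} [CStarAlgebra A] [PartialOrder A] [StarOrderedRing A]
variable {H : Type*} [NormedAddCommGroup H] [NormedSpace ℂ H] [SMul Aᵐᵒᵖ H] [CStarModuleRight A H]
variable {J : Type*} {Hs : J → Type*} [∀ j, NormedAddCommGroup (Hs j)]
  [∀ j, NormedSpace ℂ (Hs j)] [∀ j, SMul Aᵐᵒᵖ (Hs j)] [∀ j, CStarModuleRight A (Hs j)]

/-!
Write `S f = ∑' j, v_j² ⟪Λ_j P_j C f, Λ_j P_j C' f⟫`. Each term is `v_j² ⟪T_j C C' f, f⟫` with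
`T_j = P_j Λ_j* Λ_j P_j`, and a product of commuting positive adjointable operators is positive
(its square-root factor is a norm limit of polynomials in one of them), so `S f ≥ 0`.
Moreover `S`, `f ↦ ⟪K* f, K* f⟫` and `f ↦ ⟪f, f⟫` all satisfy `p (f c) = c* p(f) c`. For two
positive maps `p, q` of this kind, `p ≤ q` pointwise iff `‖p‖ ≤ ‖q‖` pointwise: one direction is
monotonicity of the norm on positive elements, and for the other, evaluating the norm bound at
`f (q f + ε)^(-1/2)` gives `p f ≤ q f + ε` for every `ε > 0`.
-/

open Filter Topology

namespace CStarAlgebra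

variable {𝒜 : Type*} [CStarAlgebra 𝒜] [PartialOrder 𝒜] [StarOrderedRing 𝒜]

lemma norm_sqrt_mul_sq {a : 𝒜} (ha : 0 ≤ a) (s : 𝒜) :
    ‖CFC.sqrt a * s‖ ^ 2 = ‖star s * a * s‖ := by
  rw [sq, ← CStarRing.norm_star_mul_self, star_mul,
    (IsSelfAdjoint.of_nonneg (CFC.sqrt_nonneg a)).star_eq, ← mul_assoc,
    mul_assoc _ (CFC.sqrt a) (CFC.sqrt a), CFC.sqrt_mul_sqrt_self a ha]

lemma le_of_forall_norm_conj_le {p q : 𝒜} (hp : 0 ≤ p) (hq : 0 ≤ q)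
    (h : ∀ c : 𝒜, ‖star c * p * c‖ ≤ ‖star c * q * c‖) : p ≤ q := by
  have hε : ∀ ε : ℝ, 0 < ε → p ≤ q + algebraMap ℝ 𝒜 ε := by
    intro ε hε
    have hb : IsStrictlyPositive (q + algebraMap ℝ 𝒜 ε) :=
      IsStrictlyPositive.nonneg_add hq (isStrictlyPositive_algebraMap hε)
    set s := (q + algebraMap ℝ 𝒜 ε) ^ (-(1 / 2) : ℝ)
    have hqb : ‖CFC.sqrt q * s‖ ≤ 1 := (le_iff_norm_sqrt_mul_rpow q _ hq hb).1
      (le_add_of_nonneg_right (isStrictlyPositive_algebraMap hε).nonneg)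
    rw [le_iff_norm_sqrt_mul_rpow p _ hp hb, ← sq_le_one_iff₀ (norm_nonneg _), norm_sqrt_mul_sq hp]
    calc ‖star s * p * s‖ ≤ ‖star s * q * s‖ := h s
      _ = ‖CFC.sqrt q * s‖ ^ 2 := (norm_sqrt_mul_sq hq s).symm
      _ ≤ 1 := pow_le_one₀ (norm_nonneg _) hqb
  have hlim : Tendsto (fun ε : ℝ => q + algebraMap ℝ 𝒜 ε) (𝓝[>] 0) (𝓝 q) := by
    simpa using (tendsto_const_nhds.add ((continuous_algebraMap ℝ 𝒜).tendsto 0)).mono_left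
      nhdsWithin_le_nhds
  exact ge_of_tendsto hlim (eventually_nhdsWithin_of_forall hε)

end CStarAlgebra

lemma IsSelfAdjoint.mul_self_mul_nonneg {𝒜 : Type*} [NonUnitalSemiring 𝒜] [PartialOrder 𝒜]
    [StarRing 𝒜] [StarOrderedRing 𝒜] {v w : 𝒜} (hv : IsSelfAdjoint v) (hvw : Commute v w)
    (hw : 0 ≤ w) : 0 ≤ v * v * w := by
  rw [mul_assoc, hvw.eq, ← mul_assoc]
  nth_rewrite 1 [← hv.star_eq]
  exact star_left_conjugate_nonneg hw v

section SqrtIter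

variable {𝔅 : Type*}

/-- A fixed point `r = (e + r²) / 2` satisfies `(1 - r)² = 1 - e`, so `1 - sqrtIter e n`
approximates `√(1 - e)`. -/
def sqrtIter [Ring 𝔅] [Algebra ℝ 𝔅] (e : 𝔅) : ℕ → 𝔅
  | 0 => 0
  | n + 1 => (2⁻¹ : ℝ) • (e + sqrtIter e n * sqrtIter e n)

section Algebraic

variable [Ring 𝔅] [Algebra ℝ 𝔅] (e : 𝔅)

@[simp] lemma sqrtIter_zero : sqrtIter e 0 = 0 := rfl

lemma sqrtIter_succ (n : ℕ) :
    sqrtIter e (n + 1) = (2⁻¹ : ℝ) • (e + sqrtIter e n * sqrtIter e n) := rfl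

lemma Commute.sqrtIter_left {e s : 𝔅} (h : Commute e s) (n : ℕ) : Commute (sqrtIter e n) s := by
  induction n with
  | zero => exact Commute.zero_left s
  | succ n ih => exact ((h.add_left (ih.mul_left ih)).smul_left _)

lemma one_sub_sqrtIter_mul_self (n : ℕ) :
    (1 - sqrtIter e n) * (1 - sqrtIter e n)
      = 1 - e + (2 : ℝ) • (sqrtIter e (n + 1) - sqrtIter e n) := by
  rw [sqrtIter_succ, smul_sub, smul_smul, mul_inv_cancel₀ two_ne_zero, one_smul, two_smul]
  noncomm_ring

end Algebraic

lemma sqrtIter_one_nonneg (n : ℕ) : 0 ≤ sqrtIter (1 : ℝ) n := by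
  cases n with
  | zero => rfl
  | succ n =>
    rw [sqrtIter_succ, smul_eq_mul]
    exact mul_nonneg (by norm_num) (add_nonneg zero_le_one (mul_self_nonneg _))

lemma sqrtIter_one_le_one (n : ℕ) : sqrtIter (1 : ℝ) n ≤ 1 := by
  induction n with
  | zero => norm_num
  | succ n ih =>
    rw [sqrtIter_succ, smul_eq_mul]
    nlinarith [sqrtIter_one_nonneg n]

lemma sqrtIter_one_monotone : Monotone (sqrtIter (1 : ℝ)) := by
  refine monotone_nat_of_le_succ fun n => ?_
  rw [sqrtIter_succ, smul_eq_mul]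
  nlinarith [sq_nonneg (1 - sqrtIter (1 : ℝ) n)]

section Normed

variable [NormedRing 𝔅] [NormedAlgebra ℝ 𝔅] {e : 𝔅}

lemma norm_sqrtIter_le (he : ‖e‖ ≤ 1) (n : ℕ) : ‖sqrtIter e n‖ ≤ sqrtIter (1 : ℝ) n := by
  induction n with
  | zero => simp
  | succ n ih =>
    have := sqrtIter_one_nonneg n
    rw [sqrtIter_succ, sqrtIter_succ, norm_smul, smul_eq_mul, Real.norm_of_nonneg (by norm_num)]
    gcongr
    calc ‖e + sqrtIter e n * sqrtIter e n‖
        ≤ ‖e‖ + ‖sqrtIter e n‖ * ‖sqrtIter e n‖ :=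
          (norm_add_le _ _).trans (by gcongr; exact norm_mul_le _ _)
      _ ≤ 1 + sqrtIter (1 : ℝ) n * sqrtIter (1 : ℝ) n := by gcongr

lemma norm_sqrtIter_succ_sub_le (he : ‖e‖ ≤ 1) (n : ℕ) :
    ‖sqrtIter e (n + 1) - sqrtIter e n‖ ≤ sqrtIter (1 : ℝ) (n + 1) - sqrtIter (1 : ℝ) n := by
  induction n with
  | zero => simp [sqrtIter_succ, norm_smul]; linarith
  | succ n ih =>
    set r := sqrtIter e
    set a := sqrtIter (1 : ℝ)
    have hdiff : r (n + 2) - r (n + 1)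
        = (2⁻¹ : ℝ) • (r (n + 1) * (r (n + 1) - r n) + (r (n + 1) - r n) * r n) := by
      simp only [r, sqrtIter_succ e (n + 1), sqrtIter_succ e n]
      rw [← smul_sub]
      noncomm_ring
    calc ‖r (n + 2) - r (n + 1)‖
        ≤ 2⁻¹ * (‖r (n + 1)‖ * ‖r (n + 1) - r n‖ + ‖r (n + 1) - r n‖ * ‖r n‖) := by
          rw [hdiff, norm_smul, Real.norm_of_nonneg (by norm_num)]
          gcongr
          exact (norm_add_le _ _).trans (add_le_add (norm_mul_le _ _) (norm_mul_le _ _))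
      _ ≤ 2⁻¹ * (a (n + 1) * (a (n + 1) - a n) + (a (n + 1) - a n) * a n) := by
          have := norm_sqrtIter_le he n
          have := norm_sqrtIter_le he (n + 1)
          have := sqrtIter_one_nonneg (n + 1)
          have := sqrtIter_one_monotone (Nat.le_succ n)
          gcongr
      _ = a (n + 2) - a (n + 1) := by
          simp only [a, sqrtIter_succ (1 : ℝ) (n + 1), sqrtIter_succ (1 : ℝ) n, smul_eq_mul]
          ring

lemma tendsto_sqrtIter_succ_sub (he : ‖e‖ ≤ 1) :
    Tendsto (fun n => sqrtIter e (n + 1) - sqrtIter e n) atTop (𝓝 0) := by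
  have hconv := tendsto_atTop_ciSup sqrtIter_one_monotone
    ⟨1, Set.forall_mem_range.2 sqrtIter_one_le_one⟩
  have hgap : Tendsto (fun n => sqrtIter (1 : ℝ) (n + 1) - sqrtIter (1 : ℝ) n) atTop (𝓝 0) := by
    simpa using (hconv.comp (tendsto_add_atTop_nat 1)).sub hconv
  exact squeeze_zero_norm (norm_sqrtIter_succ_sub_le he) hgap

lemma tendsto_one_sub_sqrtIter_mul_self (he : ‖e‖ ≤ 1) :
    Tendsto (fun n => (1 - sqrtIter e n) * (1 - sqrtIter e n)) atTop (𝓝 (1 - e)) := by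
  simp_rw [one_sub_sqrtIter_mul_self]
  simpa using tendsto_const_nhds.add ((tendsto_sqrtIter_succ_sub he).const_smul (2 : ℝ))

end Normed

end SqrtIter

namespace CStarModuleRight

section Algebraic

variable {𝒜 E : Type*} [NonUnitalCStarAlgebra 𝒜] [PartialOrder 𝒜] [AddCommGroup E]
  [Module ℂ E] [SMul 𝒜ᵐᵒᵖ E] [Norm E] [CStarModuleRight 𝒜 E]

/-- Seen as a left `𝒜ᵐᵒᵖ`-module, a right Hilbert `𝒜`-module is a `CStarModule`, whose API
(Cauchy–Schwarz, continuity of the inner product) then transfers through `MulOpposite.unop`. -/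
instance toCStarModuleMulOpposite : CStarModule 𝒜ᵐᵒᵖ E where
  inner x y := MulOpposite.op (inner 𝒜 x y)
  inner_add_right := by simp [inner_add_right]
  inner_self_nonneg := MulOpposite.op_nonneg.2 inner_self_nonneg
  inner_self := by simp [inner_self]
  inner_op_smul_right := by simp [inner_op_smul_right]
  inner_smul_right_complex := by simp [inner_smul_right_complex]
  star_inner x y := congrArg MulOpposite.op (star_inner x y)
  norm_eq_sqrt_norm_inner_self x := norm_eq_sqrt_norm_inner_self (A := 𝒜) x

variable {x y z : E}

lemma inner_add_left : inner 𝒜 (x + y) z = inner 𝒜 x z + inner 𝒜 y z :=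
  congrArg MulOpposite.unop (CStarModule.inner_add_left (A := 𝒜ᵐᵒᵖ) (x := x) (y := y) (z := z))

lemma inner_zero_left : inner 𝒜 (0 : E) y = 0 :=
  congrArg MulOpposite.unop (CStarModule.inner_zero_left (A := 𝒜ᵐᵒᵖ) (x := y))

lemma inner_zero_right : inner 𝒜 x (0 : E) = 0 :=
  congrArg MulOpposite.unop (CStarModule.inner_zero_right (A := 𝒜ᵐᵒᵖ) (x := x))

lemma inner_sub_left : inner 𝒜 (x - y) z = inner 𝒜 x z - inner 𝒜 y z :=
  congrArg MulOpposite.unop (CStarModule.inner_sub_left (A := 𝒜ᵐᵒᵖ) (x := x) (y := y) (z := z))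

lemma inner_sub_right : inner 𝒜 x (y - z) = inner 𝒜 x y - inner 𝒜 x z :=
  congrArg MulOpposite.unop (CStarModule.inner_sub_right (A := 𝒜ᵐᵒᵖ) (x := x) (y := y) (z := z))

lemma inner_smul_left_real (r : ℝ) : inner 𝒜 (r • x) y = r • inner 𝒜 x y :=
  congrArg MulOpposite.unop
    (CStarModule.inner_smul_left_real (A := 𝒜ᵐᵒᵖ) (z := r) (x := x) (y := y))

lemma inner_smul_right_real (r : ℝ) : inner 𝒜 x (r • y) = r • inner 𝒜 x y :=
  congrArg MulOpposite.unop
    (CStarModule.inner_smul_right_real (A := 𝒜ᵐᵒᵖ) (z := r) (x := x) (y := y))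

lemma inner_op_smul_left (c : 𝒜) : inner 𝒜 (x <• c) y = star c * inner 𝒜 x y :=
  congrArg MulOpposite.unop
    (CStarModule.inner_op_smul_left (A := 𝒜ᵐᵒᵖ) (a := MulOpposite.op c) (x := x) (y := y))

lemma inner_op_smul_op_smul (c : 𝒜) :
    inner 𝒜 (x <• c) (y <• c) = star c * inner 𝒜 x y * c := by
  rw [inner_op_smul_left, inner_op_smul_right, mul_assoc]

end Algebraic

section Norm

variable {𝒜 E : Type*} [NonUnitalCStarAlgebra 𝒜] [PartialOrder 𝒜]
  [NormedAddCommGroup E] [NormedSpace ℂ E] [SMul 𝒜ᵐᵒᵖ E] [CStarModuleRight 𝒜 E]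

lemma norm_sq_eq (x : E) : ‖x‖ ^ 2 = ‖inner 𝒜 x x‖ :=
  CStarModule.norm_sq_eq (A := 𝒜ᵐᵒᵖ) (x := x)

variable [StarOrderedRing 𝒜]

lemma norm_inner_le (x y : E) : ‖inner 𝒜 x y‖ ≤ ‖x‖ * ‖y‖ :=
  CStarModule.norm_inner_le (A := 𝒜ᵐᵒᵖ) E

lemma continuous_inner_left (y : E) : Continuous fun x : E => inner 𝒜 x y :=
  MulOpposite.continuous_unop.comp <|
    (CStarModule.continuous_inner (A := 𝒜ᵐᵒᵖ) (E := E)).comp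
      (continuous_id.prodMk continuous_const)

end Norm

section ConjEquivariant

variable {𝒜 E : Type*} [SMul 𝒜ᵐᵒᵖ E]

variable (𝒜) in
def ConjEquivariant [Mul 𝒜] [Star 𝒜] (p : E → 𝒜) : Prop :=
  ∀ x c, p (x <• c) = star c * p x * c

variable [CStarAlgebra 𝒜]

lemma ConjEquivariant.smul {p : E → 𝒜} (hp : ConjEquivariant 𝒜 p) (r : ℝ) :
    ConjEquivariant 𝒜 (r • p) := fun x c => by
  simp only [Pi.smul_apply, hp x c, mul_smul_comm, smul_mul_assoc]

lemma ConjEquivariant.mul_left_of_commute {p : E → 𝒜} (hp : ConjEquivariant 𝒜 p) {u : 𝒜}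
    (hu : ∀ a, Commute u a) : ConjEquivariant 𝒜 fun x => u * p x := fun x c => by
  simp only [hp x c, ← mul_assoc, (hu (star c)).eq]

lemma ConjEquivariant.tsum {ι : Type*} {p : ι → E → 𝒜} (hp : ∀ i, ConjEquivariant 𝒜 (p i))
    (hsum : ∀ x, Summable fun i => p i x) :
    ConjEquivariant 𝒜 fun x => ∑' i, p i x := fun x c => by
  simp only [hp _ x c, ((hsum x).mul_left (star c)).tsum_mul_right, (hsum x).tsum_mul_left]

end ConjEquivariant

section Adjoint

variable {𝒜 E F : Type*} [NonUnitalCStarAlgebra 𝒜] [PartialOrder 𝒜]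
  [NormedAddCommGroup E] [NormedSpace ℂ E] [SMul 𝒜ᵐᵒᵖ E] [CStarModuleRight 𝒜 E]
  [NormedAddCommGroup F] [NormedSpace ℂ F] [SMul 𝒜ᵐᵒᵖ F] [CStarModuleRight 𝒜 F]

variable (𝒜) in
def IsAdjointPair (M : E →L[ℂ] F) (M' : F →L[ℂ] E) : Prop :=
  ∀ x y, inner 𝒜 (M x) y = inner 𝒜 x (M' y)

variable (𝒜) in
def IsPositive (T : E →L[ℂ] E) : Prop :=
  IsAdjointPair 𝒜 T T ∧ ∀ x, 0 ≤ inner 𝒜 (T x) x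

namespace IsAdjointPair

variable {M N : E →L[ℂ] F} {M' N' : F →L[ℂ] E}

lemma symm (h : IsAdjointPair 𝒜 M M') : IsAdjointPair 𝒜 M' M := fun y x => by
  rw [← star_inner, ← h, star_inner]

lemma comp {G : Type*} [NormedAddCommGroup G] [NormedSpace ℂ G] [SMul 𝒜ᵐᵒᵖ G]
    [CStarModuleRight 𝒜 G] {N : F →L[ℂ] G} {N' : G →L[ℂ] F}
    (hM : IsAdjointPair 𝒜 M M') (hN : IsAdjointPair 𝒜 N N') :
    IsAdjointPair 𝒜 (N ∘L M) (M' ∘L N') := fun x y => by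
  simp only [ContinuousLinearMap.comp_apply, hN _ y, hM x]

lemma add (hM : IsAdjointPair 𝒜 M M') (hN : IsAdjointPair 𝒜 N N') :
    IsAdjointPair 𝒜 (M + N) (M' + N') := fun x y => by
  simp only [add_apply, inner_add_left, inner_add_right, hM x, hN x]

lemma sub (hM : IsAdjointPair 𝒜 M M') (hN : IsAdjointPair 𝒜 N N') :
    IsAdjointPair 𝒜 (M - N) (M' - N') := fun x y => by
  simp only [sub_apply, inner_sub_left, inner_sub_right, hM x, hN x]

lemma smul (hM : IsAdjointPair 𝒜 M M') (r : ℝ) :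
    IsAdjointPair 𝒜 (r • M) (r • M') := fun x y => by
  simp only [smul_apply, inner_smul_left_real, inner_smul_right_real, hM x]

lemma map_op_smul (h : IsAdjointPair 𝒜 M M') (x : E) (c : 𝒜) : M (x <• c) = M x <• c := by
  have hzero : ∀ y, inner 𝒜 (M (x <• c) - M x <• c) y = 0 := fun y => by
    rw [inner_sub_left, h, inner_op_smul_left, inner_op_smul_left, ← h, sub_self]
  exact sub_eq_zero.1 (inner_self.1 (hzero _))

lemma isPositive_comp (h : IsAdjointPair 𝒜 M M') : IsPositive 𝒜 (M' ∘L M) :=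
  ⟨h.comp h.symm, fun x => by
    rw [ContinuousLinearMap.comp_apply, h.symm]
    exact inner_self_nonneg⟩

end IsAdjointPair

lemma isAdjointPair_one : IsAdjointPair 𝒜 (1 : E →L[ℂ] E) 1 := fun _ _ => rfl

lemma isAdjointPair_zero : IsAdjointPair 𝒜 (0 : E →L[ℂ] F) 0 := fun _ _ => by
  simp only [zero_apply, inner_zero_left, inner_zero_right]

lemma IsAdjointPair.sqrtIter {e : E →L[ℂ] E} (he : IsAdjointPair 𝒜 e e) (n : ℕ) :
    IsAdjointPair 𝒜 (sqrtIter e n) (sqrtIter e n) := by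
  induction n with
  | zero => exact isAdjointPair_zero
  | succ n ih => exact (he.add (ih.comp ih)).smul _

lemma IsAdjointPair.conjEquivariant_inner {M N : E →L[ℂ] F} {M' N' : F →L[ℂ] E}
    (hM : IsAdjointPair 𝒜 M M') (hN : IsAdjointPair 𝒜 N N') :
    ConjEquivariant 𝒜 fun x => inner 𝒜 (M x) (N x) := fun x c => by
  simp only [hM.map_op_smul, hN.map_op_smul, inner_op_smul_op_smul]

lemma conjEquivariant_inner_self : ConjEquivariant 𝒜 fun x : E => inner 𝒜 x x :=
  fun _ c => inner_op_smul_op_smul c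

end Adjoint

section Comparison

variable {𝒜 E : Type*} [CStarAlgebra 𝒜] [PartialOrder 𝒜] [StarOrderedRing 𝒜] [SMul 𝒜ᵐᵒᵖ E]

lemma forall_le_iff_forall_norm_le {p q : E → 𝒜} (hp : ∀ x, 0 ≤ p x) (hq : ∀ x, 0 ≤ q x)
    (hpc : ConjEquivariant 𝒜 p) (hqc : ConjEquivariant 𝒜 q) :
    (∀ x, p x ≤ q x) ↔ ∀ x, ‖p x‖ ≤ ‖q x‖ := by
  refine ⟨fun h x => CStarAlgebra.norm_le_norm_of_nonneg_of_le (hp x) (h x), fun h x => ?_⟩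
  refine CStarAlgebra.le_of_forall_norm_conj_le (hp x) (hq x) fun c => ?_
  rw [← hpc, ← hqc]
  exact h _

lemma exists_bounds_iff_exists_norm_bounds {L S U : E → 𝒜}
    (hL : ∀ x, 0 ≤ L x) (hS : ∀ x, 0 ≤ S x) (hU : ∀ x, 0 ≤ U x)
    (hLc : ConjEquivariant 𝒜 L) (hSc : ConjEquivariant 𝒜 S) (hUc : ConjEquivariant 𝒜 U) :
    (∃ a b : ℝ, 0 < a ∧ 0 < b ∧ ∀ x, a • L x ≤ S x ∧ S x ≤ b • U x) ↔
      ∃ a b : ℝ, 0 < a ∧ 0 < b ∧ ∀ x, a * ‖L x‖ ≤ ‖S x‖ ∧ ‖S x‖ ≤ b * ‖U x‖ := by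
  refine exists₂_congr fun a b => and_congr_right fun ha => and_congr_right fun hb => ?_
  rw [forall_and, forall_and,
    forall_le_iff_forall_norm_le (p := fun x => a • L x) (fun x => smul_nonneg ha.le (hL x)) hS
      (hLc.smul a) hSc,
    forall_le_iff_forall_norm_le (q := fun x => b • U x) hS (fun x => smul_nonneg hb.le (hU x))
      hSc (hUc.smul b)]
  simp only [norm_smul, Real.norm_of_nonneg ha.le, Real.norm_of_nonneg hb.le]

end Comparison

section Positive

variable {𝒜 E : Type*} [CStarAlgebra 𝒜] [PartialOrder 𝒜] [StarOrderedRing 𝒜]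
  [NormedAddCommGroup E] [NormedSpace ℂ E] [SMul 𝒜ᵐᵒᵖ E] [CStarModuleRight 𝒜 E]

lemma IsPositive.inner_le_opNorm_smul {T : E →L[ℂ] E} (hT : IsPositive 𝒜 T) (x : E) :
    inner 𝒜 (T x) x ≤ ‖T‖ • inner 𝒜 x x := by
  have hnorm : ∀ y, ‖inner 𝒜 (T y) y‖ ≤ ‖‖T‖ • inner 𝒜 y y‖ := fun y =>
    calc ‖inner 𝒜 (T y) y‖ ≤ ‖T y‖ * ‖y‖ := norm_inner_le _ _
      _ ≤ ‖T‖ * ‖y‖ * ‖y‖ := by gcongr; exact T.le_opNorm y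
      _ = ‖‖T‖ • inner 𝒜 y y‖ := by
        rw [norm_smul, norm_norm, mul_assoc, ← sq, norm_sq_eq]
  refine (forall_le_iff_forall_norm_le (p := fun y => inner 𝒜 (T y) y) hT.2
    (fun y => smul_nonneg (norm_nonneg T) inner_self_nonneg) (fun y c => ?_) (fun y c => ?_)).2
    hnorm x
  · dsimp only
    rw [hT.1.map_op_smul, inner_op_smul_op_smul]
  · rw [inner_op_smul_op_smul, mul_smul_comm, smul_mul_assoc]

/-- With `y = T x`, the polarization identity gives `4 ⟪y, y⟫ ≤ ⟪x + y, x + y⟫`. -/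
lemma opNorm_le_one_of_inner_le {T : E →L[ℂ] E} (hT : IsPositive 𝒜 T)
    (hle : ∀ x, inner 𝒜 (T x) x ≤ inner 𝒜 x x) : ‖T‖ ≤ 1 := by
  refine T.opNorm_le_bound zero_le_one fun x => ?_
  set y := T x
  have hpol : (4 : ℝ) • inner 𝒜 y y ≤ inner 𝒜 (x + y) (x + y) :=
    calc (4 : ℝ) • inner 𝒜 y y
        = inner 𝒜 (T (x + y)) (x + y) - inner 𝒜 (T (x - y)) (x - y) := by
          have hyx : inner 𝒜 (T y) x = inner 𝒜 y y := hT.1 y x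
          simp only [map_add, map_sub, inner_add_left, inner_add_right, inner_sub_left,
            inner_sub_right, hyx]
          module
      _ ≤ inner 𝒜 (T (x + y)) (x + y) := sub_le_self _ (hT.2 _)
      _ ≤ inner 𝒜 (x + y) (x + y) := hle _
  have hsq : 4 * ‖y‖ ^ 2 ≤ (‖x‖ + ‖y‖) ^ 2 := by
    have := CStarAlgebra.norm_le_norm_of_nonneg_of_le
      (smul_nonneg (by norm_num) inner_self_nonneg) hpol
    rw [norm_smul, Real.norm_of_nonneg (by norm_num), ← norm_sq_eq, ← norm_sq_eq] at this
    exact this.trans (by gcongr; exact norm_add_le x y)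
  nlinarith [norm_nonneg x, norm_nonneg y]

lemma IsPositive.inner_mul_nonneg_of_tendsto {S T : E →L[ℂ] E} (hS : IsPositive 𝒜 S)
    {Q : ℕ → E →L[ℂ] E} (hQ : ∀ n, IsAdjointPair 𝒜 (Q n) (Q n)) (hSQ : ∀ n, Commute S (Q n))
    (hlim : Tendsto (fun n => Q n * Q n) atTop (𝓝 T)) (x : E) :
    0 ≤ inner 𝒜 ((S * T) x) x := by
  have hcont : Continuous fun R : E →L[ℂ] E => inner 𝒜 ((S * R) x) x :=
    (continuous_inner_left x).comp ((continuous_eval_const x).comp (continuous_const_mul S))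
  refine ge_of_tendsto' ((hcont.tendsto T).comp hlim) fun n => ?_
  have hSQQ : (S * (Q n * Q n)) x = Q n (S (Q n x)) := by
    rw [← mul_assoc, (hSQ n).eq, mul_assoc]
    rfl
  rw [Function.comp_apply, hSQQ, hQ n]
  exact hS.2 _

/-- With `c = ‖T‖ + 1` and `e = 1 - c⁻¹ T` (so `‖e‖ ≤ 1`), the operators `1 - sqrtIter e n`
are self-adjoint, commute with `S`, and their squares converge to `c⁻¹ T`. -/
lemma IsPositive.mul {S T : E →L[ℂ] E} (hS : IsPositive 𝒜 S) (hT : IsPositive 𝒜 T)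
    (hST : Commute S T) : IsPositive 𝒜 (S * T) := by
  refine ⟨fun x y => ?_, fun x => ?_⟩
  · have h := hT.1.comp hS.1 x y
    rwa [← ContinuousLinearMap.mul_def, ← ContinuousLinearMap.mul_def, ← hST.eq] at h
  set c : ℝ := ‖T‖ + 1
  have hc : 0 < c := by positivity
  set e : E →L[ℂ] E := 1 - c⁻¹ • T
  have he : IsAdjointPair 𝒜 e e := isAdjointPair_one.sub (hT.1.smul _)
  have he_inner : ∀ z, inner 𝒜 (e z) z = inner 𝒜 z z - c⁻¹ • inner 𝒜 (T z) z := fun z => by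
    simp only [e, sub_apply, smul_apply, inner_sub_left, inner_smul_left_real]
    rfl
  have he_norm : ‖e‖ ≤ 1 := by
    refine opNorm_le_one_of_inner_le ⟨he, fun z => ?_⟩ fun z => ?_ <;> rw [he_inner]
    · have hTc : inner 𝒜 (T z) z ≤ c • inner 𝒜 z z :=
        (hT.inner_le_opNorm_smul z).trans
          (smul_le_smul_of_nonneg_right (by linarith) inner_self_nonneg)
      have := smul_le_smul_of_nonneg_left hTc (inv_nonneg.2 hc.le)
      rwa [smul_smul, inv_mul_cancel₀ hc.ne', one_smul, ← sub_nonneg] at this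
    · exact sub_le_self _ (smul_nonneg (inv_nonneg.2 hc.le) (hT.2 z))
  have heS : Commute e S := (Commute.one_left S).sub_left (hST.symm.smul_left _)
  have hlim := tendsto_one_sub_sqrtIter_mul_self he_norm
  rw [sub_sub_cancel] at hlim
  have h := hS.inner_mul_nonneg_of_tendsto (fun n => isAdjointPair_one.sub (he.sqrtIter n))
    (fun n => ((Commute.one_left S).sub_left (heS.sqrtIter_left n)).symm) hlim x
  rw [mul_smul_comm, smul_apply, inner_smul_left_real] at h
  simpa [smul_smul, hc.ne'] using smul_nonneg hc.le h

variable {F : Type*} [NormedAddCommGroup F] [NormedSpace ℂ F] [SMul 𝒜ᵐᵒᵖ F] [CStarModuleRight 𝒜 F]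

lemma IsAdjointPair.inner_map_map_nonneg {M : E →L[ℂ] F} {M' : F →L[ℂ] E}
    (hM : IsAdjointPair 𝒜 M M') {C C' : E →L[ℂ] E} (hC : IsPositive 𝒜 C)
    (hC' : IsPositive 𝒜 C') (hCC' : Commute C C') (hCT : Commute C (M' ∘L M))
    (hC'T : Commute C' (M' ∘L M)) (x : E) : 0 ≤ inner 𝒜 (M (C x)) (M (C' x)) := by
  have hP := hM.isPositive_comp.mul (hC.mul hC' hCC') (hCT.mul_left hC'T).symm
  calc 0 ≤ inner 𝒜 ((M' ∘L M * (C * C')) x) x := hP.2 x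
    _ = inner 𝒜 x ((C * (M' ∘L M * C')) x) := by
      rw [hP.1, ← mul_assoc, ← hCT.eq, mul_assoc]
    _ = inner 𝒜 (M (C x)) (M (C' x)) := (hC.1 _ _).symm.trans (hM _ _).symm

end Positive

end CStarModuleRight

open CStarModuleRight in
theorem controlled_K_g_fusion_frame_iff_norm_bounds_general
    (C C' : H →L[ℂ] H) (P : J → H →L[ℂ] H) (Λ : ∀ j, H →L[ℂ] Hs j)
    (Λad : ∀ j, Hs j →L[ℂ] H) (v : J → A)
    (hΛad : ∀ (j) (x : H) (u : Hs j), (inner A (Λ j x) u : A) = inner A x (Λad j u))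
    (hP_sa : ∀ (j) (f g : H), (inner A (P j f) g : A) = inner A f (P j g))
    (hC_sa : ∀ f g : H, (inner A (C f) g : A) = inner A f (C g))
    (hC'_sa : ∀ f g : H, (inner A (C' f) g : A) = inner A f (C' g))
    (hC_pos : ∀ f : H, 0 ≤ (inner A (C f) f : A))
    (hC'_pos : ∀ f : H, 0 ≤ (inner A (C' f) f : A))
    (hCC' : C.comp C' = C'.comp C)
    (hCT : ∀ j, C.comp ((P j).comp ((Λad j).comp ((Λ j).comp (P j))))
      = ((P j).comp ((Λad j).comp ((Λ j).comp (P j)))).comp C)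
    (hC'T : ∀ j, C'.comp ((P j).comp ((Λad j).comp ((Λ j).comp (P j))))
      = ((P j).comp ((Λad j).comp ((Λ j).comp (P j)))).comp C')
    (hv_pos : ∀ j, 0 ≤ v j)
    (hv_central : ∀ (j) (a : A), Commute (v j) a)
    (K Kad : H →L[ℂ] H)
    (hKad : ∀ x y : H, (inner A (K x) y : A) = inner A x (Kad y))
    (hsum : ∀ f : H, Summable fun j =>
      v j * v j * (inner A (Λ j (P j (C f))) (Λ j (P j (C' f))) : A)) :
    (∃ a b : ℝ, 0 < a ∧ 0 < b ∧ ∀ f : H,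
      a • (inner A (Kad f) (Kad f) : A) ≤
        (∑' j, v j * v j * (inner A (Λ j (P j (C f))) (Λ j (P j (C' f))) : A)) ∧
      (∑' j, v j * v j * (inner A (Λ j (P j (C f))) (Λ j (P j (C' f))) : A)) ≤
        b • (inner A f f : A)) ↔
    (∃ a b : ℝ, 0 < a ∧ 0 < b ∧ ∀ f : H,
      a * ‖Kad f‖ ^ 2 ≤
        ‖∑' j, v j * v j * (inner A (Λ j (P j (C f))) (Λ j (P j (C' f))) : A)‖ ∧
      ‖∑' j, v j * v j * (inner A (Λ j (P j (C f))) (Λ j (P j (C' f))) : A)‖ ≤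
        b * ‖f‖ ^ 2) := by
  have hM : ∀ j, IsAdjointPair A ((Λ j).comp (P j)) ((P j).comp (Λad j)) :=
    fun j => IsAdjointPair.comp (hP_sa j) (hΛad j)
  have hterm : ∀ j f, 0 ≤ v j * v j * inner A (Λ j (P j (C f))) (Λ j (P j (C' f))) :=
    fun j f => (IsSelfAdjoint.of_nonneg (hv_pos j)).mul_self_mul_nonneg (hv_central j _)
      ((hM j).inner_map_map_nonneg ⟨hC_sa, hC_pos⟩ ⟨hC'_sa, hC'_pos⟩ hCC' (hCT j) (hC'T j) f)
  have hterm_conj : ∀ j, ConjEquivariant A fun f =>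
      v j * v j * inner A (Λ j (P j (C f))) (Λ j (P j (C' f))) := fun j =>
    (IsAdjointPair.conjEquivariant_inner (IsAdjointPair.comp hC_sa (hM j))
      (IsAdjointPair.comp hC'_sa (hM j))).mul_left_of_commute
      fun a => (hv_central j a).mul_left (hv_central j a)
  have hK : IsAdjointPair A Kad K := IsAdjointPair.symm hKad
  have key := exists_bounds_iff_exists_norm_bounds (fun f => inner_self_nonneg (x := Kad f))
    (fun f => tsum_nonneg (hterm · f)) (fun f => inner_self_nonneg)
    (hK.conjEquivariant_inner hK) (ConjEquivariant.tsum hterm_conj hsum)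
    conjEquivariant_inner_self
  simpa only [← norm_sq_eq] using key

/-- `Λ_{CC'}` is a `(C,C')`-controlled `K`-g-fusion frame iff there
are `A, B > 0` with `A‖K*f‖² ≤ ‖Σ_j v_j²⟨Λ_jP_{W_j}Cf, Λ_jP_{W_j}C'f⟩‖ ≤ B‖f‖²`. -/
theorem controlled_K_g_fusion_frame_iff_norm_bounds
    (C C' : H →L[ℂ] H) (P : J → H →L[ℂ] H) (Λ : ∀ j, H →L[ℂ] Hs j)
    (Λad : ∀ j, Hs j →L[ℂ] H) (v : J → A)
    (hΛad : ∀ (j) (x : H) (u : Hs j), (inner A (Λ j x) u : A) = inner A x (Λad j u))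
    (hP_idem : ∀ j, (P j).comp (P j) = P j)
    (hP_sa : ∀ (j) (f g : H), (inner A (P j f) g : A) = inner A f (P j g))
    (hC_sa : ∀ f g : H, (inner A (C f) g : A) = inner A f (C g))
    (hC'_sa : ∀ f g : H, (inner A (C' f) g : A) = inner A f (C' g))
    (hC_pos : ∀ f : H, 0 ≤ (inner A (C f) f : A))
    (hC'_pos : ∀ f : H, 0 ≤ (inner A (C' f) f : A))
    (hC_inv : Function.Bijective C) (hC'_inv : Function.Bijective C')
    (hCC' : C.comp C' = C'.comp C)
    (hCT : ∀ j, C.comp ((P j).comp ((Λad j).comp ((Λ j).comp (P j))))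
      = ((P j).comp ((Λad j).comp ((Λ j).comp (P j)))).comp C)
    (hC'T : ∀ j, C'.comp ((P j).comp ((Λad j).comp ((Λ j).comp (P j))))
      = ((P j).comp ((Λad j).comp ((Λ j).comp (P j)))).comp C')
    (hv_pos : ∀ j, 0 ≤ v j) (hv_inv : ∀ j, IsUnit (v j))
    (hv_central : ∀ (j) (a : A), Commute (v j) a)
    (K Kad : H →L[ℂ] H)
    (hKad : ∀ x y : H, (inner A (K x) y : A) = inner A x (Kad y))
    (hsum : ∀ f : H, Summable fun j =>
      v j * v j * (inner A (Λ j (P j (C f))) (Λ j (P j (C' f))) : A)) :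
    (∃ a b : ℝ, 0 < a ∧ 0 < b ∧ ∀ f : H,
      a • (inner A (Kad f) (Kad f) : A) ≤
        (∑' j, v j * v j * (inner A (Λ j (P j (C f))) (Λ j (P j (C' f))) : A)) ∧
      (∑' j, v j * v j * (inner A (Λ j (P j (C f))) (Λ j (P j (C' f))) : A)) ≤
        b • (inner A f f : A)) ↔
    (∃ a b : ℝ, 0 < a ∧ 0 < b ∧ ∀ f : H,
      a * ‖Kad f‖ ^ 2 ≤
        ‖∑' j, v j * v j * (inner A (Λ j (P j (C f))) (Λ j (P j (C' f))) : A)‖ ∧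
      ‖∑' j, v j * v j * (inner A (Λ j (P j (C f))) (Λ j (P j (C' f))) : A)‖ ≤
        b * ‖f‖ ^ 2) :=
  controlled_K_g_fusion_frame_iff_norm_bounds_general C C' P Λ Λad v hΛad hP_sa hC_sa hC'_sa hC_pos
    hC'_pos hCC' hCT hC'T hv_pos hv_central K Kad hKad hsum
end
end
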